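/- arXiv:1404.0595 — 5 statements merged into one kernel-verified Lean document; each statement's English description precedes it below -/
import Mathlib

section
/- Let φ be a continuous flow on a compact metric space X with an asymptotically stable singular point p, and let δ₀, δ > 0 be such that d(x,p) < δ implies φ_t(x) ∈ B_{δ₀}(p) for all t ≥ 0 and φ_t(x) → p as t → +∞. Set U = B_δ(p). Then for every x ∈ U the set O(x) = {φ_t(x) : t ≥ 0} ∪ {p} is a nonempty compact subset of X, and the map O : U → K(X) is continuous with respect to the Hausdorff metric on the space K(X) of nonempty compact subsets of X. -/
open Metric Set Filter Topology TopologicalSpace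

/-- Let `p` be an asymptotically stable singular point of a continuous flow `φ` on a compact
metric space `X`, and let `δ₀, δ > 0` be such that `dist x p < δ` implies `φ t x ∈ B δ₀ p`
for all `t ≥ 0` and `φ t x → p` as `t → +∞`.  Set `U = ball p δ`.  Then for every `x ∈ U`
the set `O x = {φ t x : t ≥ 0} ∪ {p}` is a nonempty compact subset of `X`, and the induced
map `O : U → K(X)` is continuous for the Hausdorff metric on the space `K(X)` of nonempty
compact subsets of `X`. -/
theorem orbit_closure_map_continuous
    {X : Type*} [MetricSpace X] [CompactSpace X]
    (φ : ℝ → X → X)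
    (hφcont : Continuous fun q : ℝ × X => φ q.1 q.2)
    (hφzero : ∀ x, φ 0 x = x)
    (hφadd : ∀ s t x, φ (s + t) x = φ s (φ t x))
    (p : X) (hsing : ∀ t : ℝ, φ t p = p)
    (hstable : ∀ ε > 0, ∃ δ' > 0, ∀ x, dist x p < δ' → ∀ t ≥ (0 : ℝ), dist (φ t x) p < ε)
    (δ₀ δ : ℝ) (hδ₀ : 0 < δ₀) (hδ : 0 < δ)
    (hprop : ∀ x, dist x p < δ → (∀ t ≥ (0 : ℝ), φ t x ∈ ball p δ₀) ∧
      Tendsto (fun t : ℝ => φ t x) atTop (𝓝 p)) :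
    (∀ x ∈ ball p δ,
      ((fun t : ℝ => φ t x) '' Ici 0 ∪ {p}).Nonempty ∧
      IsCompact ((fun t : ℝ => φ t x) '' Ici 0 ∪ {p})) ∧
    (∀ O : X → NonemptyCompacts X,
      (∀ x ∈ ball p δ, (O x : Set X) = (fun t : ℝ => φ t x) '' Ici 0 ∪ {p}) →
      ContinuousOn O (ball p δ)) := by
  constructor
  · -- nonemptiness and compactness
    intro x hx
    refine ⟨⟨p, Or.inr rfl⟩, ?_⟩
    have himg : (fun t : ℝ => φ t x) '' Ici 0 = Set.range fun t : ℝ => φ |t| x := by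
      ext z
      constructor
      · rintro ⟨t, ht, rfl⟩
        exact ⟨t, by simp [abs_of_nonneg (mem_Ici.mp ht : (0:ℝ) ≤ t)]⟩
      · rintro ⟨t, rfl⟩
        exact ⟨|t|, abs_nonneg t, rfl⟩
    rw [himg, Set.union_singleton]
    have htend : Tendsto (fun t : ℝ => φ |t| x) (cocompact ℝ) (𝓝 p) := by
      rw [cocompact_eq_atBot_atTop]
      have h := (hprop x (by simpa using hx)).2
      exact tendsto_sup.2 ⟨h.comp tendsto_abs_atBot_atTop, h.comp tendsto_abs_atTop_atTop⟩
    exact htend.isCompact_insert_range_of_cocompact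
      (hφcont.comp (by continuity : Continuous fun t : ℝ => ((|t|, x) : ℝ × X)))
  · -- continuity of the orbit map
    intro O hO
    rw [Metric.continuousOn_iff]
    intro x hx ε hε
    -- stability radius for ε/4
    obtain ⟨δ', hδ'pos, hδ'⟩ := hstable (ε / 4) (by linarith)
    -- time T after which orbit of x is δ'/2-close to p
    have htend := (hprop x (by simpa using hx)).2
    obtain ⟨N, hN⟩ := (Metric.tendsto_atTop.mp htend) (δ' / 2) (by linarith)
    set T : ℝ := max N 0 with hT
    have hT0 : (0 : ℝ) ≤ T := le_max_right _ _
    have hTx : dist (φ T x) p < δ' / 2 := hN T (le_max_left _ _)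
    -- uniform continuity on Icc 0 T × univ
    have hK : IsCompact ((Icc (0:ℝ) T) ×ˢ (univ : Set X)) :=
      isCompact_Icc.prod isCompact_univ
    have huc : UniformContinuousOn (fun q : ℝ × X => φ q.1 q.2)
        ((Icc (0:ℝ) T) ×ˢ (univ : Set X)) :=
      hK.uniformContinuousOn_of_continuous hφcont.continuousOn
    obtain ⟨η, hηpos, hη⟩ := (Metric.uniformContinuousOn_iff.mp huc)
      (min (ε / 4) (δ' / 2)) (by positivity)
    refine ⟨η, hηpos, fun y hy hyx => ?_⟩
    -- key: for all t ∈ [0,T], dist (φ t y) (φ t x) < min (ε/4) (δ'/2)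
    have hclose : ∀ t ∈ Icc (0:ℝ) T, dist (φ t y) (φ t x) < min (ε / 4) (δ' / 2) := by
      intro t ht
      have := hη (t, y) ⟨ht, mem_univ _⟩ (t, x) ⟨ht, mem_univ _⟩
        (by simp only [Prod.dist_eq, dist_self, max_lt_iff]; exact ⟨hηpos, hyx⟩)
      simpa using this
    -- orbit of y is eventually ε/4-close to p
    have hTy : dist (φ T y) p < δ' := by
      calc dist (φ T y) p ≤ dist (φ T y) (φ T x) + dist (φ T x) p := dist_triangle _ _ _
        _ < min (ε / 4) (δ' / 2) + δ' / 2 := by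
            exact add_lt_add (hclose T ⟨hT0, le_rfl⟩) hTx
        _ ≤ δ' / 2 + δ' / 2 := by
            exact add_le_add (min_le_right _ _) le_rfl
        _ = δ' := by ring
    have htail : ∀ z : X, dist (φ T z) p < δ' → ∀ t, T ≤ t → dist (φ t z) p < ε / 4 := by
      intro z hz t hTt
      have : φ t z = φ (t - T) (φ T z) := by
        rw [← hφadd]; ring_nf
      rw [this]
      exact hδ' _ hz _ (by linarith)
    -- bound the Hausdorff distance
    have hOy := hO y hy
    have hOx := hO x hx
    have hxball : dist x p < δ := by simpa using hx
    have hyball : dist y p < δ := by simpa using hy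
    have hmem : ∀ a b : X, ∀ ha : dist (φ T a) p < δ',
        ∀ s ∈ (fun t : ℝ => φ t a) '' Ici 0 ∪ {p},
        ∃ s' ∈ (fun t : ℝ => φ t b) '' Ici 0 ∪ {p},
        (∀ t ∈ Icc (0:ℝ) T, dist (φ t a) (φ t b) ≤ ε / 2) → dist s s' ≤ ε / 2 := by
      intro a b ha s hs
      rcases hs with ⟨t, ht, rfl⟩ | hs
      · rcases le_or_gt t T with h | h
        · exact ⟨φ t b, Or.inl ⟨t, ht, rfl⟩, fun H => H t ⟨ht, h⟩⟩
        · refine ⟨p, Or.inr rfl, fun _ => ?_⟩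
          have := htail a ha t (le_of_lt h)
          linarith
      · simp only [mem_singleton_iff] at hs
        exact ⟨p, Or.inr rfl, fun _ => by rw [hs, dist_self]; linarith⟩
    have hbd : ∀ t ∈ Icc (0:ℝ) T, dist (φ t y) (φ t x) ≤ ε / 2 := by
      intro t ht
      have := hclose t ht
      have h2 : min (ε / 4) (δ' / 2) ≤ ε / 4 := min_le_left _ _
      linarith
    have hbd' : ∀ t ∈ Icc (0:ℝ) T, dist (φ t x) (φ t y) ≤ ε / 2 := by
      intro t ht; rw [dist_comm]; exact hbd t ht
    have hhd : hausdorffDist (O y : Set X) (O x : Set X) ≤ ε / 2 := by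
      rw [hOy, hOx]
      refine hausdorffDist_le_of_mem_dist (by linarith) ?_ ?_
      · intro s hs
        obtain ⟨s', hs', himp⟩ := hmem y x hTy s hs
        exact ⟨s', hs', himp hbd⟩
      · intro s hs
        obtain ⟨s', hs', himp⟩ := hmem x y (by linarith : dist (φ T x) p < δ') s hs
        exact ⟨s', hs', himp hbd'⟩
    calc dist (O y) (O x) = hausdorffDist (O y : Set X) (O x : Set X) :=
          NonemptyCompacts.dist_eq
      _ ≤ ε / 2 := hhd
      _ < ε := by linarith
end

section
/- Let (X,d) be a compact metric space with a dense sequence q₁, q₂, q₃, …, and for each i define μ_i : K(X) → ℝ by μ_i(A) = max_{x ∈ A} d(q_i, x) − min_{x ∈ A} d(q_i, x). Then μ : K(X) → ℝ defined by μ(A) = Σ_{i=1}^∞ μ_i(A)/2^i is a size function; that is, μ is continuous with respect to the Hausdorff metric, μ(A) ≥ 0 with equality if and only if A is a singleton, and if A ⊆ B with A ≠ B then μ(A) < μ(B). -/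
open Metric Set Filter Topology TopologicalSpace

section aux

variable {X : Type*} [MetricSpace X]

private lemma aux_img_compact (c : X) (A : NonemptyCompacts X) :
    IsCompact ((fun x => dist c x) '' (A : Set X)) :=
  A.isCompact.image (by fun_prop)

private lemma aux_sup_mem (c : X) (A : NonemptyCompacts X) :
    sSup ((fun x => dist c x) '' (A : Set X)) ∈ (fun x => dist c x) '' (A : Set X) :=
  (aux_img_compact c A).sSup_mem (A.nonempty.image _)

private lemma aux_inf_mem (c : X) (A : NonemptyCompacts X) :
    sInf ((fun x => dist c x) '' (A : Set X)) ∈ (fun x => dist c x) '' (A : Set X) :=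
  (aux_img_compact c A).sInf_mem (A.nonempty.image _)

private lemma aux_le_sup (c : X) (A : NonemptyCompacts X) {x : X} (hx : x ∈ (A : Set X)) :
    dist c x ≤ sSup ((fun x => dist c x) '' (A : Set X)) :=
  le_csSup (aux_img_compact c A).bddAbove (mem_image_of_mem _ hx)

private lemma aux_inf_le (c : X) (A : NonemptyCompacts X) {x : X} (hx : x ∈ (A : Set X)) :
    sInf ((fun x => dist c x) '' (A : Set X)) ≤ dist c x :=
  csInf_le (aux_img_compact c A).bddBelow (mem_image_of_mem _ hx)

private lemma aux_edist_ne_top (A B : NonemptyCompacts X) :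
    EMetric.hausdorffEdist (A : Set X) (B : Set X) ≠ ⊤ :=
  hausdorffEdist_ne_top_of_nonempty_of_bounded A.nonempty B.nonempty
    A.isCompact.isBounded B.isCompact.isBounded

private lemma aux_sup_lip (c : X) (A B : NonemptyCompacts X) :
    sSup ((fun x => dist c x) '' (A : Set X)) ≤
      sSup ((fun x => dist c x) '' (B : Set X)) + dist A B := by
  obtain ⟨a, ha, hae⟩ := aux_sup_mem c A
  obtain ⟨b, hb, hbe⟩ := B.isCompact.exists_infDist_eq_dist B.nonempty a
  have h1 : infDist a (B : Set X) ≤ dist A B :=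
    infDist_le_hausdorffDist_of_mem ha (aux_edist_ne_top A B)
  have h2 : dist c a ≤ dist c b + dist b a := dist_triangle _ _ _
  have h3 : dist c b ≤ sSup ((fun x => dist c x) '' (B : Set X)) := aux_le_sup c B hb
  have h4 : dist b a = infDist a (B : Set X) := by rw [dist_comm]; exact hbe.symm
  rw [← hae]
  linarith

private lemma aux_inf_lip (c : X) (A B : NonemptyCompacts X) :
    sInf ((fun x => dist c x) '' (A : Set X)) ≤
      sInf ((fun x => dist c x) '' (B : Set X)) + dist A B := by
  obtain ⟨b, hb, hbe⟩ := aux_inf_mem c B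
  obtain ⟨a, ha, hae⟩ := A.isCompact.exists_infDist_eq_dist A.nonempty b
  have h1 : infDist b (A : Set X) ≤ dist B A :=
    infDist_le_hausdorffDist_of_mem hb (aux_edist_ne_top B A)
  have h2 : sInf ((fun x => dist c x) '' (A : Set X)) ≤ dist c a := aux_inf_le c A ha
  have h3 : dist c a ≤ dist c b + dist b a := dist_triangle _ _ _
  have h4 : dist b a = infDist b (A : Set X) := hae.symm
  rw [dist_comm A B, ← hbe]
  linarith

end aux

/-- **Whitney's construction of a size function.**
Let `(X, d)` be a compact metric space with a dense sequence `q₀, q₁, q₂, …`, and for each `i`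
let `μᵢ(A) = max_{x ∈ A} d(qᵢ, x) − min_{x ∈ A} d(qᵢ, x)` for nonempty compact `A ⊆ X`.
Then `μ(A) = Σᵢ μᵢ(A) / 2^(i+1)` is a size function: it is continuous for the Hausdorff
metric, `μ(A) ≥ 0` with equality iff `A` is a singleton, and `μ(A) < μ(B)` whenever
`A ⊆ B` and `A ≠ B`. -/
theorem whitney_size_function
    {X : Type*} [MetricSpace X] [CompactSpace X]
    (q : ℕ → X) (hq : DenseRange q)
    (μi : ℕ → NonemptyCompacts X → ℝ)
    (hμi : ∀ i A, μi i A =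
      sSup ((fun x => dist (q i) x) '' (A : Set X)) -
      sInf ((fun x => dist (q i) x) '' (A : Set X)))
    (μ : NonemptyCompacts X → ℝ)
    (hμ : ∀ A, μ A = ∑' i : ℕ, μi i A / 2 ^ (i + 1)) :
    Continuous μ ∧
    (∀ A : NonemptyCompacts X, 0 ≤ μ A ∧ (μ A = 0 ↔ ∃ x, (A : Set X) = {x})) ∧
    (∀ A B : NonemptyCompacts X, (A : Set X) ⊆ (B : Set X) → A ≠ B → μ A < μ B) := by
  set D := diam (univ : Set X) with hD
  have hD0 : 0 ≤ D := diam_nonneg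
  -- basic bounds on μi
  have hnonneg : ∀ i A, 0 ≤ μi i A := by
    intro i A
    rw [hμi]
    obtain ⟨a, ha, hae⟩ := aux_sup_mem (q i) A
    have h := aux_inf_le (q i) A ha
    have h2 : sInf ((fun x => dist (q i) x) '' (A : Set X)) ≤
        sSup ((fun x => dist (q i) x) '' (A : Set X)) := h.trans (le_of_eq hae)
    linarith
  have hboundD : ∀ i A, μi i A ≤ D := by
    intro i A
    rw [hμi]
    obtain ⟨a, ha, hae⟩ := aux_sup_mem (q i) A
    obtain ⟨b, hb, hbe⟩ := aux_inf_mem (q i) A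
    rw [← hae, ← hbe]
    simp only []
    have h1 : dist (q i) a ≤ dist (q i) b + dist b a := dist_triangle _ _ _
    have h2 : dist b a ≤ D := dist_le_diam_of_mem isCompact_univ.isBounded
      (mem_univ b) (mem_univ a)
    linarith
  -- summability
  have hsummand_nonneg : ∀ A (i : ℕ), 0 ≤ μi i A / 2 ^ (i + 1) := fun A i =>
    div_nonneg (hnonneg i A) (by positivity)
  have hsummand_le : ∀ A (i : ℕ), μi i A / 2 ^ (i + 1) ≤ D / 2 ^ (i + 1) := by
    intro A i
    gcongr
    exact hboundD i A
  have hDsum : Summable (fun i : ℕ => D / 2 ^ (i + 1)) := by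
    have heq : (fun i : ℕ => D / 2 ^ (i + 1)) = fun i : ℕ => (D / 2) * (1 / 2) ^ i := by
      funext i
      rw [pow_succ, one_div, inv_pow]
      rw [div_eq_mul_inv, div_eq_mul_inv, mul_inv]
      ring
    rw [heq]
    exact summable_geometric_two.mul_left _
  have hSummable : ∀ A, Summable (fun i : ℕ => μi i A / 2 ^ (i + 1)) := fun A =>
    Summable.of_nonneg_of_le (hsummand_nonneg A) (hsummand_le A) hDsum
  -- Lipschitz
  have hlip : ∀ i, LipschitzWith 2 (μi i) := by
    intro i
    apply LipschitzWith.of_dist_le_mul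
    intro A B
    have h1 := aux_sup_lip (q i) A B
    have h2 := aux_sup_lip (q i) B A
    have h3 := aux_inf_lip (q i) A B
    have h4 := aux_inf_lip (q i) B A
    rw [dist_comm B A] at h2 h4
    rw [Real.dist_eq, hμi, hμi]
    push_cast
    rw [abs_le]
    constructor <;> linarith
  have hcont : Continuous μ := by
    have heq : μ = fun A => ∑' i : ℕ, μi i A / 2 ^ (i + 1) := funext hμ
    rw [heq]
    refine continuous_tsum (fun i => ?_) hDsum (fun n A => ?_)
    · exact (hlip i).continuous.div_const _
    · rw [Real.norm_eq_abs, abs_of_nonneg (hsummand_nonneg A n)]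
      exact hsummand_le A n
  refine ⟨hcont, fun A => ⟨?_, ?_, ?_⟩, ?_⟩
  · rw [hμ]; exact tsum_nonneg (hsummand_nonneg A)
  · -- μ A = 0 → singleton
    intro h0
    obtain ⟨x, hx⟩ := A.nonempty
    have hzero : ∀ i, μi i A = 0 := by
      intro i
      have hle := Summable.le_tsum (hSummable A) i (fun j _ => hsummand_nonneg A j)
      rw [← hμ, h0] at hle
      have h2 : μi i A / 2 ^ (i + 1) = 0 := le_antisymm hle (hsummand_nonneg A i)
      rcases div_eq_zero_iff.1 h2 with h | h
      · exact h
      · exact absurd h (by positivity)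
    -- all elements are equidistant from each q i
    have hdist : ∀ i, ∀ y ∈ (A : Set X), dist (q i) y = dist (q i) x := by
      intro i y hy
      have h1 := aux_le_sup (q i) A hy
      have h2 := aux_inf_le (q i) A hy
      have h3 := aux_le_sup (q i) A hx
      have h4 := aux_inf_le (q i) A hx
      have h5 := hzero i
      rw [hμi] at h5
      linarith
    refine ⟨x, Subset.antisymm ?_ (singleton_subset_iff.2 hx)⟩
    intro y hy
    have : dist y x ≤ 0 := by
      refine le_of_forall_pos_le_add ?_
      intro ε hε
      obtain ⟨i, hi⟩ := Metric.denseRange_iff.1 hq x (ε / 2) (by linarith)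
      have h1 : dist (q i) y = dist (q i) x := hdist i y hy
      have h2 : dist y x ≤ dist y (q i) + dist (q i) x := dist_triangle _ _ _
      rw [dist_comm y (q i), h1] at h2
      rw [dist_comm x (q i)] at hi
      linarith
    exact dist_le_zero.1 this
  · -- singleton → μ A = 0
    rintro ⟨x, hxA⟩
    rw [hμ]
    have hzero : ∀ i : ℕ, μi i A / 2 ^ (i + 1) = 0 := by
      intro i
      rw [hμi, hxA]
      simp
    rw [tsum_congr hzero, tsum_zero]
  · -- strict monotonicity
    intro A B hsub hne
    have hsetne : (A : Set X) ≠ (B : Set X) := fun h => hne (NonemptyCompacts.ext h)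
    obtain ⟨b, hbB, hbA⟩ : ∃ b, b ∈ (B : Set X) ∧ b ∉ (A : Set X) := by
      by_contra h
      push_neg at h
      exact hsetne (Subset.antisymm hsub fun y hy => h y hy)
    set ε := infDist b (A : Set X) with hε
    have hεpos : 0 < ε := by
      rcases lt_or_eq_of_le (infDist_nonneg (s := (A : Set X)) (x := b)) with h | h
      · exact h
      · exfalso
        obtain ⟨a, ha, hae⟩ := A.isCompact.exists_infDist_eq_dist A.nonempty b
        have hda : dist b a = 0 := hae.symm.trans h.symm
        exact hbA (by rw [dist_eq_zero.1 hda]; exact ha)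
    obtain ⟨i, hi⟩ := Metric.denseRange_iff.1 hq b (ε / 3) (by linarith)
    -- monotonicity of each μi
    have hmono : ∀ j, μi j A ≤ μi j B := by
      intro j
      have h1 : sSup ((fun x => dist (q j) x) '' (A : Set X)) ≤
          sSup ((fun x => dist (q j) x) '' (B : Set X)) :=
        csSup_le_csSup (aux_img_compact (q j) B).bddAbove (A.nonempty.image _)
          (image_mono hsub)
      have h2 : sInf ((fun x => dist (q j) x) '' (B : Set X)) ≤
          sInf ((fun x => dist (q j) x) '' (A : Set X)) :=
        csInf_le_csInf (aux_img_compact (q j) B).bddBelow (A.nonempty.image _)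
          (image_mono hsub)
      rw [hμi, hμi]
      linarith
    -- strict at i
    have hstrict : μi i A < μi i B := by
      have h1 : sSup ((fun x => dist (q i) x) '' (A : Set X)) ≤
          sSup ((fun x => dist (q i) x) '' (B : Set X)) :=
        csSup_le_csSup (aux_img_compact (q i) B).bddAbove (A.nonempty.image _)
          (image_mono hsub)
      have h2 : sInf ((fun x => dist (q i) x) '' (B : Set X)) ≤ dist (q i) b :=
        aux_inf_le (q i) B hbB
      have h3 : dist (q i) b < ε / 3 := by rw [dist_comm]; exact hi
      have h4 : 2 * ε / 3 ≤ sInf ((fun x => dist (q i) x) '' (A : Set X)) := by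
        refine le_csInf (A.nonempty.image _) ?_
        rintro y ⟨x, hx, rfl⟩
        have h5 : ε ≤ dist b x := infDist_le_dist_of_mem hx
        have h6 : dist b x ≤ dist b (q i) + dist (q i) x := dist_triangle _ _ _
        rw [dist_comm b (q i)] at h6
        linarith
      rw [hμi, hμi]
      linarith
    rw [hμ, hμ]
    refine Summable.tsum_lt_tsum_of_nonneg (i := i) (hsummand_nonneg A) ?_ ?_ (hSummable B)
    · intro j
      gcongr
      exact hmono j
    · have h2 : (0:ℝ) < 2 ^ (i + 1) := by positivity
      exact (div_lt_div_iff_of_pos_right h2).2 hstrict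
end

section
/- Every compact metric space X admits a size function; that is, there exists a continuous map μ : K(X) → ℝ (with respect to the Hausdorff metric on the space K(X) of nonempty compact subsets of X) such that μ(A) ≥ 0 with equality if and only if A is a singleton, and μ(A) < μ(B) whenever A ⊆ B and A ≠ B. -/
open Metric Set Filter Topology TopologicalSpace

section Aux

variable {X : Type*} [MetricSpace X] [CompactSpace X]

private lemma aux_bounded (s : Set X) : Bornology.IsBounded s :=
  (isCompact_univ.isBounded).subset (Set.subset_univ s)

private lemma aux_fin {s t : Set X} (hs : s.Nonempty) (ht : t.Nonempty) :
    EMetric.hausdorffEdist s t ≠ ⊤ :=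
  Metric.hausdorffEdist_ne_top_of_nonempty_of_bounded hs ht (aux_bounded s) (aux_bounded t)

/-- distance from x to a point of A is at most hausdorffDist {x} A -/
private lemma aux_key1 {x a : X} {A : Set X} (ha : a ∈ A) :
    dist x a ≤ hausdorffDist {x} A := by
  have h := infDist_le_hausdorffDist_of_mem ha
    (aux_fin ⟨a, ha⟩ (Set.singleton_nonempty x))
  rwa [infDist_singleton, hausdorffDist_comm, dist_comm] at h

private lemma aux_key2 {x : X} {A : Set X} {r : ℝ} (hr : 0 ≤ r) (hA : A.Nonempty)
    (h : ∀ a ∈ A, dist x a ≤ r) : hausdorffDist {x} A ≤ r := by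
  refine hausdorffDist_le_of_mem_dist hr ?_ ?_
  · rintro y rfl
    obtain ⟨a, ha⟩ := hA
    exact ⟨a, ha, h a ha⟩
  · intro a ha
    exact ⟨x, rfl, by rw [dist_comm]; exact h a ha⟩

private lemma aux_lip (x : X) :
    LipschitzWith 1 fun A : NonemptyCompacts X => hausdorffDist {x} (A : Set X) := by
  apply LipschitzWith.of_le_add
  intro A B
  calc hausdorffDist {x} (A : Set X)
      ≤ hausdorffDist {x} (B : Set X) + hausdorffDist (B : Set X) (A : Set X) :=
        hausdorffDist_triangle (aux_fin (Set.singleton_nonempty x) B.nonempty)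
    _ = hausdorffDist {x} (B : Set X) + dist A B := by
        congr 1
        rw [NonemptyCompacts.dist_eq]
        exact hausdorffDist_comm

end Aux

/-- **Whitney.** Every compact metric space admits a size function: a continuous map
`μ : K(X) → ℝ` (for the Hausdorff metric on the space `K(X)` of nonempty compact subsets)
with `μ(A) ≥ 0`, equality iff `A` is a singleton, and `μ(A) < μ(B)` whenever `A ⊆ B` and
`A ≠ B`. -/
theorem exists_size_function
    (X : Type*) [MetricSpace X] [CompactSpace X] :
    ∃ μ : NonemptyCompacts X → ℝ, Continuous μ ∧
      (∀ A : NonemptyCompacts X, 0 ≤ μ A ∧ (μ A = 0 ↔ ∃ x, (A : Set X) = {x})) ∧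
      (∀ A B : NonemptyCompacts X, (A : Set X) ⊆ (B : Set X) → A ≠ B → μ A < μ B) := by
  rcases isEmpty_or_nonempty X with hX | hX
  · haveI : IsEmpty (NonemptyCompacts X) :=
      ⟨fun A => A.nonempty.elim fun x _ => hX.false x⟩
    exact ⟨fun _ => 0, continuous_const, fun A => isEmptyElim A, fun A => isEmptyElim A⟩
  obtain ⟨u, hu⟩ := TopologicalSpace.exists_dense_seq X
  set C : ℝ := diam (Set.univ : Set X) with hC
  -- the building blocks
  set g : ℕ → NonemptyCompacts X → ℝ :=
    fun n A => hausdorffDist {u n} (A : Set X) - infDist (u n) (A : Set X) with hg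
  have g_nonneg : ∀ n A, 0 ≤ g n A := by
    intro n A
    have := infDist_le_hausdorffDist_of_mem (Set.mem_singleton (u n))
      (aux_fin (Set.singleton_nonempty (u n)) A.nonempty)
    simpa [hg] using this
  have g_bound : ∀ n A, g n A ≤ C := by
    intro n A
    have h1 : hausdorffDist {u n} (A : Set X) ≤ C := by
      refine aux_key2 diam_nonneg A.nonempty fun a _ => ?_
      exact dist_le_diam_of_mem (aux_bounded _) (Set.mem_univ _) (Set.mem_univ _)
    have h2 : 0 ≤ infDist (u n) (A : Set X) := infDist_nonneg
    simp only [hg]; linarith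
  have g_cont : ∀ n, Continuous (g n) := by
    intro n
    exact ((aux_lip (u n)).continuous).sub (lipschitz_infDist_set (u n)).continuous
  have g_mono : ∀ n (A B : NonemptyCompacts X), (A : Set X) ⊆ B → g n A ≤ g n B := by
    intro n A B hAB
    have h1 : hausdorffDist {u n} (A : Set X) ≤ hausdorffDist {u n} (B : Set X) := by
      refine aux_key2 hausdorffDist_nonneg A.nonempty fun a ha => ?_
      exact aux_key1 (hAB ha)
    have h2 : infDist (u n) (B : Set X) ≤ infDist (u n) (A : Set X) :=
      infDist_le_infDist_of_subset hAB A.nonempty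
    simp only [hg]; linarith
  have hCnn : 0 ≤ C := diam_nonneg
  have sumC : Summable (fun n : ℕ => (1 / 2 : ℝ) ^ n * C) :=
    summable_geometric_two.mul_right C
  have sumg : ∀ A : NonemptyCompacts X, Summable (fun n => (1 / 2 : ℝ) ^ n * g n A) := by
    intro A
    refine Summable.of_nonneg_of_le (fun n => ?_) (fun n => ?_) sumC
    · exact mul_nonneg (by positivity) (g_nonneg n A)
    · exact mul_le_mul_of_nonneg_left (g_bound n A) (by positivity)
  set μ : NonemptyCompacts X → ℝ := fun A => ∑' n, (1 / 2 : ℝ) ^ n * g n A with hμ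
  have term_le : ∀ (A : NonemptyCompacts X) (n : ℕ), (1 / 2 : ℝ) ^ n * g n A ≤ μ A := by
    intro A n
    exact Summable.le_tsum (sumg A) n fun m _ => mul_nonneg (by positivity) (g_nonneg m A)
  have μ_nonneg : ∀ A, 0 ≤ μ A := fun A =>
    tsum_nonneg fun n => mul_nonneg (by positivity) (g_nonneg n A)
  refine ⟨μ, ?_, ?_, ?_⟩
  · -- continuity
    refine continuous_tsum (fun n => (continuous_const.mul (g_cont n))) sumC fun n A => ?_
    rw [Real.norm_of_nonneg (mul_nonneg (by positivity) (g_nonneg n A))]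
    exact mul_le_mul_of_nonneg_left (g_bound n A) (by positivity)
  · -- nonneg and zero iff singleton
    intro A
    refine ⟨μ_nonneg A, ?_, ?_⟩
    · -- μ A = 0 → singleton
      intro h0
      by_contra hns
      push_neg at hns
      obtain ⟨a, ha⟩ := A.nonempty
      have : ∃ a' ∈ (A : Set X), a' ≠ a := by
        by_contra h
        push_neg at h
        exact hns a (Set.eq_singleton_iff_unique_mem.2 ⟨ha, h⟩)
      obtain ⟨a', ha', hne⟩ := this
      set r : ℝ := dist a a' with hr
      have hrpos : 0 < r := dist_pos.2 (Ne.symm hne)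
      obtain ⟨n, hn⟩ := hu.exists_dist_lt a (show (0:ℝ) < r / 3 by linarith)
      have h1 : dist (u n) a' ≤ hausdorffDist {u n} (A : Set X) := aux_key1 ha'
      have h2 : infDist (u n) (A : Set X) ≤ dist (u n) a := infDist_le_dist_of_mem ha
      have h3 : r ≤ dist a (u n) + dist (u n) a' := dist_triangle a (u n) a'
      have h5 : dist (u n) a = dist a (u n) := dist_comm _ _
      have hg_pos : 0 < g n A := by simp only [hg]; linarith
      have hterm : (0:ℝ) < (1 / 2 : ℝ) ^ n * g n A := mul_pos (by positivity) hg_pos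
      linarith [term_le A n]
    · -- singleton → μ A = 0
      rintro ⟨x, hx⟩
      have : ∀ n, g n A = 0 := by
        intro n
        have h1 : hausdorffDist {u n} (A : Set X) ≤ dist (u n) x := by
          refine aux_key2 dist_nonneg A.nonempty fun a haA => ?_
          rw [hx] at haA
          rw [haA]
        have h2 : dist (u n) x ≤ hausdorffDist {u n} (A : Set X) :=
          aux_key1 (by rw [hx]; rfl)
        have h3 : infDist (u n) (A : Set X) = dist (u n) x := by
          rw [hx, infDist_singleton]
        simp only [hg]; linarith
      simp only [hμ, this, mul_zero, tsum_zero]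
  · -- strict monotonicity
    intro A B hAB hne
    have hexists : ∃ b ∈ (B : Set X), b ∉ (A : Set X) := by
      by_contra h
      push_neg at h
      exact hne (NonemptyCompacts.ext (Set.Subset.antisymm hAB h))
    obtain ⟨b, hbB, hbA⟩ := hexists
    have hAclosed : IsClosed (A : Set X) := A.isCompact.isClosed
    set r : ℝ := infDist b (A : Set X) with hr
    have hrpos : 0 < r := (hAclosed.notMem_iff_infDist_pos A.nonempty).1 hbA
    obtain ⟨n, hn⟩ := hu.exists_dist_lt b (show (0:ℝ) < r / 3 by linarith)
    have h1 : infDist (u n) (B : Set X) ≤ dist (u n) b := infDist_le_dist_of_mem hbB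
    have h2 : r ≤ infDist (u n) (A : Set X) + dist b (u n) :=
      infDist_le_infDist_add_dist
    have h3 : dist b (u n) < r / 3 := hn
    have h4 : dist (u n) b = dist b (u n) := dist_comm _ _
    have hhd : hausdorffDist {u n} (A : Set X) ≤ hausdorffDist {u n} (B : Set X) := by
      refine aux_key2 hausdorffDist_nonneg A.nonempty fun a ha => aux_key1 (hAB ha)
    have hgap : g n A + r / 3 ≤ g n B := by
      simp only [hg]; linarith
    -- sum the differences
    have hdiff : μ B - μ A = ∑' k, ((1 / 2 : ℝ) ^ k * g k B - (1 / 2 : ℝ) ^ k * g k A) := by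
      exact (Summable.tsum_sub (sumg B) (sumg A)).symm
    have hterm : (0:ℝ) < (1 / 2 : ℝ) ^ n * g n B - (1 / 2 : ℝ) ^ n * g n A := by
      rw [← mul_sub]
      have hr3 : (0:ℝ) < r / 3 := by linarith
      have hlt : g n A < g n B := lt_of_lt_of_le (by linarith) hgap
      exact mul_pos (by positivity) (sub_pos.2 hlt)
    have hle : (1 / 2 : ℝ) ^ n * g n B - (1 / 2 : ℝ) ^ n * g n A ≤ μ B - μ A := by
      rw [hdiff]
      refine Summable.le_tsum ((sumg B).sub (sumg A)) n fun m _ => ?_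
      rw [← mul_sub]
      exact mul_nonneg (by positivity) (by linarith [g_mono m A B hAB])
    linarith
end

section
/- Let f : X → X be a homeomorphism of a compact metric space X, let K(X) be the space of nonempty compact subsets of X with the Hausdorff metric, let f' : K(X) → K(X) be the induced homeomorphism f'(A) = {f(x) : x ∈ A}, and let F₁ = {A ∈ K(X) : A is a singleton}. Then f is expansive if and only if F₁ is an isolated set for f', i.e., there is an open neighborhood U of F₁ in K(X) such that f'^n(A) ∈ U for all n ∈ ℤ implies A ∈ F₁. Moreover, if δ is an expansive constant for f, then {A ∈ K(X) : diam(A) < δ} is such an isolating neighborhood. -/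
open Metric Set Filter Topology TopologicalSpace

/-- The `n`-th iterate (`n : ℕ`) of a homeomorphism. -/
def homeoPow {X : Type*} [TopologicalSpace X] (f : X ≃ₜ X) : ℕ → X ≃ₜ X
  | 0 => Homeomorph.refl X
  | n + 1 => (homeoPow f n).trans f

/-- The `n`-th iterate (`n : ℤ`) of a homeomorphism. -/
def homeoZPow {X : Type*} [TopologicalSpace X] (f : X ≃ₜ X) : ℤ → X ≃ₜ X
  | Int.ofNat n => homeoPow f n
  | Int.negSucc n => (homeoPow f (n + 1)).symm

/-- The map induced by a homeomorphism on the nonempty compact subsets. -/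
def inducedMap {X : Type*} [TopologicalSpace X] (f : X ≃ₜ X)
    (A : NonemptyCompacts X) : NonemptyCompacts X :=
  ⟨⟨f '' (A : Set X), A.isCompact.image f.continuous⟩, A.nonempty.image f⟩

/-- The set `F₁` of singletons in the hyperspace `K(X)`. -/
def setOfSingletons (X : Type*) [TopologicalSpace X] : Set (NonemptyCompacts X) :=
  {A | ∃ x : X, (A : Set X) = {x}}

/-- The coercion of `inducedMap f A` is the image `f '' A`. -/
lemma inducedMap_coe {X : Type*} [TopologicalSpace X] (f : X ≃ₜ X)
    (A : NonemptyCompacts X) : (inducedMap f A : Set X) = f '' (A : Set X) := rfl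

/-- The singleton as a nonempty compact set. -/
def singNC {X : Type*} [MetricSpace X] (x : X) : NonemptyCompacts X :=
  ⟨⟨{x}, isCompact_singleton⟩, singleton_nonempty x⟩

lemma diam_le_diam_add_two_dist {X : Type*} [MetricSpace X]
    (A B : NonemptyCompacts X) :
    diam (B : Set X) ≤ diam (A : Set X) + 2 * dist A B := by
  have hne : EMetric.hausdorffEdist (B : Set X) (A : Set X) ≠ ⊤ :=
    hausdorffEdist_ne_top_of_nonempty_of_bounded B.nonempty A.nonempty
      B.isCompact.isBounded A.isCompact.isBounded
  apply diam_le_of_forall_dist_le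
  · positivity
  intro p hp q hq
  obtain ⟨p', hp'A, hp'⟩ := A.isCompact.exists_infDist_eq_dist A.nonempty p
  obtain ⟨q', hq'A, hq'⟩ := A.isCompact.exists_infDist_eq_dist A.nonempty q
  have h1 : dist p p' ≤ dist A B := by
    rw [← hp', NonemptyCompacts.dist_eq, hausdorffDist_comm]
    exact infDist_le_hausdorffDist_of_mem hp hne
  have h2 : dist q q' ≤ dist A B := by
    rw [← hq', NonemptyCompacts.dist_eq, hausdorffDist_comm]
    exact infDist_le_hausdorffDist_of_mem hq hne
  have h3 : dist p' q' ≤ diam (A : Set X) :=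
    dist_le_diam_of_mem A.isCompact.isBounded hp'A hq'A
  calc dist p q ≤ dist p p' + dist p' q' + dist q' q := dist_triangle4 p p' q' q
    _ ≤ dist A B + diam (A : Set X) + dist A B := by
        have := dist_comm q q' ▸ h2; gcongr
    _ = diam (A : Set X) + 2 * dist A B := by ring

lemma isOpen_diam_lt {X : Type*} [MetricSpace X] (δ : ℝ) :
    IsOpen {A : NonemptyCompacts X | diam (A : Set X) < δ} := by
  rw [Metric.isOpen_iff]
  intro A hA
  refine ⟨(δ - diam (A : Set X)) / 4, by simp at hA; linarith, ?_⟩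
  intro B hB
  simp only [mem_ball] at hB
  have := diam_le_diam_add_two_dist A B
  rw [dist_comm] at hB
  simp only [mem_setOf_eq] at hA ⊢
  linarith

/-- The key expansivity consequence: the second bullet of the theorem. -/
lemma part2 {X : Type*} [MetricSpace X] [CompactSpace X] (f : X ≃ₜ X)
    (δ : ℝ) (hδ : δ > 0)
    (hexp : ∀ x y : X, x ≠ y →
      ∃ n : ℤ, dist (homeoZPow f n x) (homeoZPow f n y) > δ) :
    IsOpen {A : NonemptyCompacts X | diam (A : Set X) < δ} ∧
      setOfSingletons X ⊆ {A : NonemptyCompacts X | diam (A : Set X) < δ} ∧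
      ∀ A : NonemptyCompacts X,
        (∀ n : ℤ, inducedMap (homeoZPow f n) A ∈
          {A : NonemptyCompacts X | diam (A : Set X) < δ}) →
        A ∈ setOfSingletons X := by
  refine ⟨isOpen_diam_lt δ, ?_, ?_⟩
  · rintro A ⟨x, hx⟩
    simp [mem_setOf_eq, hx, hδ]
  · intro A hA
    obtain ⟨x, hxA⟩ := A.nonempty
    refine ⟨x, ?_⟩
    ext y
    simp only [mem_singleton_iff]
    constructor
    · intro hyA
      by_contra hxy
      obtain ⟨n, hn⟩ := hexp y x hxy
      have hdiam := hA n
      simp only [mem_setOf_eq, inducedMap_coe] at hdiam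
      have h1 : homeoZPow f n y ∈ homeoZPow f n '' (A : Set X) := mem_image_of_mem _ hyA
      have h2 : homeoZPow f n x ∈ homeoZPow f n '' (A : Set X) := mem_image_of_mem _ hxA
      have hb : Bornology.IsBounded (homeoZPow f n '' (A : Set X)) :=
        (A.isCompact.image (homeoZPow f n).continuous).isBounded
      have := dist_le_diam_of_mem hb h1 h2
      linarith
    · rintro rfl; exact hxA

lemma singNC_lipschitz {X : Type*} [MetricSpace X] :
    LipschitzWith 1 (singNC (X := X)) := by
  apply LipschitzWith.of_dist_le_mul
  intro x y
  rw [NonemptyCompacts.dist_eq]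
  simp only [NNReal.coe_one, one_mul]
  apply hausdorffDist_le_of_mem_dist dist_nonneg
  · rintro z hz
    simp only [singNC, NonemptyCompacts.coe_mk, Compacts.coe_mk, mem_singleton_iff] at hz ⊢
    exact ⟨y, rfl, by rw [hz]⟩
  · rintro z hz
    simp only [singNC, NonemptyCompacts.coe_mk, Compacts.coe_mk, mem_singleton_iff] at hz ⊢
    exact ⟨x, rfl, by rw [hz, dist_comm]⟩

lemma setOfSingletons_eq_range {X : Type*} [MetricSpace X] :
    setOfSingletons X = range (singNC (X := X)) := by
  ext A
  constructor
  · rintro ⟨x, hx⟩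
    exact ⟨x, by apply NonemptyCompacts.ext; exact hx.symm⟩
  · rintro ⟨x, rfl⟩
    exact ⟨x, rfl⟩

/-- A homeomorphism `f` of a compact metric space is expansive iff the set `F₁` of
singletons is an isolated set for the induced homeomorphism `f'` of the hyperspace
`K(X)` of nonempty compact subsets with the Hausdorff metric.  Moreover, if `δ` is an
expansive constant for `f`, then `{A ∈ K(X) : diam A < δ}` is such an isolating
neighborhood of `F₁`. -/
theorem expansive_iff_singletons_isolated
    {X : Type*} [MetricSpace X] [CompactSpace X] (f : X ≃ₜ X) :
    ((∃ α > (0 : ℝ), ∀ x y : X, x ≠ y →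
        ∃ n : ℤ, dist (homeoZPow f n x) (homeoZPow f n y) > α) ↔
      (∃ U : Set (NonemptyCompacts X), IsOpen U ∧ setOfSingletons X ⊆ U ∧
        ∀ A : NonemptyCompacts X, (∀ n : ℤ, inducedMap (homeoZPow f n) A ∈ U) →
          A ∈ setOfSingletons X)) ∧
    (∀ δ > (0 : ℝ), (∀ x y : X, x ≠ y →
        ∃ n : ℤ, dist (homeoZPow f n x) (homeoZPow f n y) > δ) →
      IsOpen {A : NonemptyCompacts X | diam (A : Set X) < δ} ∧
      setOfSingletons X ⊆ {A : NonemptyCompacts X | diam (A : Set X) < δ} ∧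
      ∀ A : NonemptyCompacts X,
        (∀ n : ℤ, inducedMap (homeoZPow f n) A ∈
          {A : NonemptyCompacts X | diam (A : Set X) < δ}) →
        A ∈ setOfSingletons X) := by
  constructor
  · constructor
    · rintro ⟨α, hα, hexp⟩
      obtain ⟨h1, h2, h3⟩ := part2 f α hα hexp
      exact ⟨_, h1, h2, h3⟩
    · rintro ⟨U, hUopen, hUsub, hUiso⟩
      -- `setOfSingletons X` is compact
      have hcomp : IsCompact (setOfSingletons X) := by
        rw [setOfSingletons_eq_range]
        exact isCompact_range singNC_lipschitz.continuous
      obtain ⟨ε, hε, hthick⟩ := hcomp.exists_thickening_subset_open hUopen hUsub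
      refine ⟨ε / 2, by linarith, ?_⟩
      intro x y hxy
      by_contra hcon
      push_neg at hcon
      set A : NonemptyCompacts X :=
        ⟨⟨{x, y}, (Set.toFinite {x, y}).isCompact⟩, insert_nonempty x {y}⟩ with hAdef
      have hmem : ∀ n : ℤ, inducedMap (homeoZPow f n) A ∈ U := by
        intro n
        apply hthick
        rw [mem_thickening_iff]
        refine ⟨singNC (homeoZPow f n x), ⟨homeoZPow f n x, rfl⟩, ?_⟩
        rw [NonemptyCompacts.dist_eq]
        have hle : hausdorffDist (inducedMap (homeoZPow f n) A : Set X)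
            (singNC (homeoZPow f n x) : Set X) ≤
            dist (homeoZPow f n x) (homeoZPow f n y) := by
          apply hausdorffDist_le_of_mem_dist dist_nonneg
          · rintro z hz
            rw [inducedMap_coe] at hz
            obtain ⟨w, hw, rfl⟩ := hz
            rcases hw with rfl | hw
            · exact ⟨homeoZPow f n w, rfl, by simp [dist_nonneg]⟩
            · simp only [mem_singleton_iff] at hw
              subst hw
              exact ⟨homeoZPow f n x, rfl, by rw [dist_comm]⟩
          · rintro z hz
            simp only [singNC, NonemptyCompacts.coe_mk, Compacts.coe_mk,
              mem_singleton_iff] at hz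
            subst hz
            refine ⟨homeoZPow f n x, ?_, by simp [dist_nonneg]⟩
            rw [inducedMap_coe]
            exact mem_image_of_mem _ (mem_insert x {y})
        calc hausdorffDist (inducedMap (homeoZPow f n) A : Set X)
              (singNC (homeoZPow f n x) : Set X) ≤ _ := hle
          _ ≤ ε / 2 := hcon n
          _ < ε := by linarith
      obtain ⟨z, hz⟩ := hUiso A hmem
      have hxz : x = z := by
        have : x ∈ (A : Set X) := mem_insert x {y}
        rw [hz] at this; exact this
      have hyz : y = z := by
        have : y ∈ (A : Set X) := mem_insert_of_mem x rfl
        rw [hz] at this; exact this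
      exact hxy (hxz.trans hyz.symm)
  · intro δ hδ hexp
    exact part2 f δ hδ hexp
end

section
/- Let f : X → X be a homeomorphism of a compact metric space X, let C(X) ⊆ K(X) be the space of subcontinua (nonempty compact connected subsets) of X with the Hausdorff metric, let f' : C(X) → C(X) be the induced homeomorphism f'(C) = {f(x) : x ∈ C}, and let F₁ ⊆ C(X) be the set of singletons. Then f is continuum-wise expansive if and only if F₁ is an isolated set for f' : C(X) → C(X), i.e., there is an open neighborhood U of F₁ in C(X) such that f'^n(C) ∈ U for all n ∈ ℤ implies C ∈ F₁. -/
open Metric Set Filter Topology TopologicalSpace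

/-- The hyperspace `C(X)` of subcontinua (nonempty compact connected subsets) of `X`,
as a subspace of the hyperspace `K(X)` of nonempty compact subsets of `X` with the
Hausdorff metric. -/
def Subcontinua (X : Type*) [TopologicalSpace X] : Type _ :=
  {A : NonemptyCompacts X // IsConnected (A : Set X)}

noncomputable instance {X : Type*} [MetricSpace X] : MetricSpace (Subcontinua X) :=
  Subtype.metricSpace

/-- The map induced by a homeomorphism on subcontinua. -/
def inducedMapC {X : Type*} [TopologicalSpace X] (f : X ≃ₜ X)
    (C : Subcontinua X) : Subcontinua X :=
  ⟨⟨⟨f '' (C.1 : Set X), C.1.isCompact.image f.continuous⟩, C.1.nonempty.image f⟩,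
    C.2.image f f.continuous.continuousOn⟩

/-- The set `F₁` of singletons in the hyperspace `C(X)` of subcontinua. -/
def setOfSingletonsC (X : Type*) [TopologicalSpace X] : Set (Subcontinua X) :=
  {C | ∃ x : X, (C.1 : Set X) = {x}}

/-- Distance in `Subcontinua X` is Hausdorff distance of underlying sets. -/
lemma Subcontinua.dist_eq' {X : Type*} [MetricSpace X] (C D : Subcontinua X) :
    dist C D = hausdorffDist (C.1 : Set X) (D.1 : Set X) := by
  show dist C.1 D.1 = _
  exact NonemptyCompacts.dist_eq

/-- Diameter bound via Hausdorff distance. -/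
lemma diam_le_of_hausdorffDist_lt {X : Type*} [MetricSpace X] [CompactSpace X]
    {s t : Set X} (hs : s.Nonempty) (ht : t.Nonempty) {r : ℝ}
    (h : hausdorffDist t s < r) : diam t ≤ diam s + 2 * r := by
  have hr : 0 < r := lt_of_le_of_lt hausdorffDist_nonneg h
  have hne : EMetric.hausdorffEdist t s ≠ ⊤ :=
    hausdorffEdist_ne_top_of_nonempty_of_bounded ht hs
      (isBounded_of_compactSpace) (isBounded_of_compactSpace)
  apply diam_le_of_forall_dist_le (by positivity)
  intro x hx y hy
  obtain ⟨x', hx', hxx'⟩ := exists_dist_lt_of_hausdorffDist_lt hx h hne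
  obtain ⟨y', hy', hyy'⟩ := exists_dist_lt_of_hausdorffDist_lt hy h hne
  calc dist x y ≤ dist x x' + dist x' y' + dist y' y := dist_triangle4 x x' y' y
    _ ≤ r + diam s + r := by
        have h1 := dist_le_diam_of_mem (isBounded_of_compactSpace (s := s)) hx' hy'
        have h2 : dist y' y ≤ r := by rw [dist_comm]; exact hyy'.le
        linarith [hxx'.le]
    _ ≤ diam s + 2 * r := by linarith

/-- The singleton map `X → C(X)`. -/
def singMap {X : Type*} [MetricSpace X] (x : X) : Subcontinua X :=
  ⟨⟨⟨{x}, isCompact_singleton⟩, singleton_nonempty x⟩, isConnected_singleton⟩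

lemma singMap_lipschitz {X : Type*} [MetricSpace X] :
    LipschitzWith 1 (singMap (X := X)) := by
  apply LipschitzWith.of_dist_le_mul
  intro x y
  rw [Subcontinua.dist_eq']
  simp only [NNReal.coe_one, one_mul]
  apply hausdorffDist_le_of_mem_dist dist_nonneg
  · rintro a ha
    exact ⟨y, rfl, by simp_all [singMap]⟩
  · rintro a ha
    exact ⟨x, rfl, by simp_all [singMap, dist_comm]⟩

lemma range_singMap {X : Type*} [MetricSpace X] :
    range (singMap (X := X)) = setOfSingletonsC X := by
  ext C
  constructor
  · rintro ⟨x, rfl⟩; exact ⟨x, rfl⟩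
  · rintro ⟨x, hx⟩
    refine ⟨x, ?_⟩
    apply Subtype.ext
    apply NonemptyCompacts.ext
    exact hx.symm

/-- **Kato-type characterization.**  A homeomorphism `f` of a compact metric space is
continuum-wise expansive iff the set `F₁` of singletons is an isolated set for the
induced homeomorphism `f' : C(X) → C(X)` on the hyperspace of subcontinua with the
Hausdorff metric. -/
theorem cw_expansive_iff_singletons_isolated
    {X : Type*} [MetricSpace X] [CompactSpace X] (f : X ≃ₜ X) :
    (∃ δ > (0 : ℝ), ∀ C : Subcontinua X,
      (∀ n : ℤ, diam (homeoZPow f n '' (C.1 : Set X)) ≤ δ) →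
      ∃ x : X, (C.1 : Set X) = {x}) ↔
    (∃ U : Set (Subcontinua X), IsOpen U ∧ setOfSingletonsC X ⊆ U ∧
      ∀ C : Subcontinua X, (∀ n : ℤ, inducedMapC (homeoZPow f n) C ∈ U) →
        C ∈ setOfSingletonsC X) := by
  constructor
  · rintro ⟨δ, hδ, hexp⟩
    refine ⟨{C : Subcontinua X | diam (C.1 : Set X) < δ}, ?_, ?_, ?_⟩
    · rw [Metric.isOpen_iff]
      intro C hC
      refine ⟨(δ - diam (C.1 : Set X)) / 4, by simp only [mem_setOf_eq] at hC; linarith, ?_⟩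
      intro D hD
      rw [mem_ball, Subcontinua.dist_eq'] at hD
      simp only [mem_setOf_eq] at hC ⊢
      have := diam_le_of_hausdorffDist_lt C.1.nonempty D.1.nonempty hD
      linarith
    · rintro C ⟨x, hx⟩
      simp only [mem_setOf_eq, hx, diam_singleton]
      exact hδ
    · intro C hC
      exact hexp C fun n => le_of_lt (hC n)
  · rintro ⟨U, hUopen, hUsub, hUiso⟩
    have hcomp : IsCompact (setOfSingletonsC X) := by
      rw [← range_singMap]
      exact isCompact_range singMap_lipschitz.continuous
    obtain ⟨δ, hδ, hth⟩ := hcomp.exists_thickening_subset_open hUopen hUsub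
    refine ⟨δ / 2, by linarith, ?_⟩
    intro C hC
    apply hUiso
    intro n
    obtain ⟨x, hx⟩ := C.1.nonempty
    apply hth
    rw [mem_thickening_iff]
    refine ⟨singMap (homeoZPow f n x), ⟨homeoZPow f n x, rfl⟩, ?_⟩
    rw [Subcontinua.dist_eq']
    have hmem : homeoZPow f n x ∈ homeoZPow f n '' (C.1 : Set X) := ⟨x, hx, rfl⟩
    have hb : Bornology.IsBounded (homeoZPow f n '' (C.1 : Set X)) := isBounded_of_compactSpace
    have : hausdorffDist ((inducedMapC (homeoZPow f n) C).1 : Set X) ({homeoZPow f n x} : Set X)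
        ≤ diam (homeoZPow f n '' (C.1 : Set X)) := by
      apply hausdorffDist_le_of_mem_dist diam_nonneg
      · intro a ha
        exact ⟨homeoZPow f n x, rfl, dist_le_diam_of_mem hb ha hmem⟩
      · rintro a rfl
        exact ⟨homeoZPow f n x, hmem, by simpa using diam_nonneg⟩
    calc hausdorffDist ((inducedMapC (homeoZPow f n) C).1 : Set X)
          (((singMap (homeoZPow f n x)) : Subcontinua X).1 : Set X)
        ≤ diam (homeoZPow f n '' (C.1 : Set X)) := this
      _ ≤ δ / 2 := hC n
      _ < δ := by linarith
end
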